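/- Let s_1, …, s_m form a greedy sequence in E with threshold 1, and suppose that every edge of E overlaps some edge of s_1 ∪ … ∪ s_m (the greedy procedure exhausted the graph). Then ALG := s_1 ∪ … ∪ s_m is a consecutive matching in E and for every consecutive matching O in E one has 4·|ALG| ≥ |O| (a 4-approximation of a maximum consecutive matching). -/

import Mathlib

/-- Two edges `(i,j)` and `(i',j')` of the bipartite graph overlap if
`|i - i'| ≤ 1` or `|j - j'| ≤ 1`. -/
def Overlap {n : ℕ} (e e' : Fin n × Fin n) : Prop :=
  ((e.1.val : ℤ) - e'.1.val).natAbs ≤ 1 ∨ ((e.2.val : ℤ) - e'.2.val).natAbs ≤ 1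

instance {n : ℕ} (e e' : Fin n × Fin n) : Decidable (Overlap e e') := by
  unfold Overlap; infer_instance

/-- `M` is a consecutive matching in `E`. -/
def ConsecMatching {n : ℕ} (E M : Finset (Fin n × Fin n)) : Prop :=
  M ⊆ E ∧
  (∀ e ∈ M, ∀ e' ∈ M, e ≠ e' → e.1 ≠ e'.1 ∧ e.2 ≠ e'.2) ∧
  (∀ e ∈ M, ∀ e' ∈ M, e'.1.val = e.1.val + 1 → e'.2.val = e.2.val + 1) ∧
  (∀ e ∈ M, ∀ e' ∈ M, e'.2.val = e.2.val + 1 → e'.1.val = e.1.val + 1)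

/-- `s` is the run of `ℓ` consecutive edges at `(p, q)`,
i.e. `s = {(p+r, q+r) : 0 ≤ r < ℓ}`. -/
def IsRunAt {n : ℕ} (s : Finset (Fin n × Fin n)) (p q ℓ : ℕ) : Prop :=
  p + ℓ ≤ n ∧ q + ℓ ≤ n ∧
  ∀ e : Fin n × Fin n, e ∈ s ↔ ∃ r < ℓ, e.1.val = p + r ∧ e.2.val = q + r

/-- `s` is a run of `ℓ` consecutive edges. -/
def IsRun {n : ℕ} (s : Finset (Fin n × Fin n)) (ℓ : ℕ) : Prop :=
  ∃ p q, IsRunAt s p q ℓ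

/-- `E` contains no run of `k` consecutive edges. -/
def NoRun {n : ℕ} (E : Finset (Fin n × Fin n)) (k : ℕ) : Prop :=
  ¬ ∃ s : Finset (Fin n × Fin n), IsRun s k ∧ s ⊆ E

/-- `s` is a streak of `M`: a run of (at least one) consecutive edges contained in `M`,
maximal under inclusion among runs contained in `M`. -/
def IsStreak {n : ℕ} (M s : Finset (Fin n × Fin n)) : Prop :=
  (∃ ℓ, 1 ≤ ℓ ∧ IsRun s ℓ) ∧ s ⊆ M ∧
  ∀ s' ℓ', IsRun s' ℓ' → s' ⊆ M → s ⊆ s' → s' = s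

/-- `s 0, …, s (m-1)` is a greedy sequence in `E` with threshold `k`:
each `s i` is a run of at least `k` consecutive edges, all of whose edges
overlap no edge of the previously chosen runs, and no run of consecutive
edges all still available at step `i` is longer than `s i`. -/
def GreedySeq {n : ℕ} (E : Finset (Fin n × Fin n)) (k m : ℕ)
    (s : ℕ → Finset (Fin n × Fin n)) : Prop :=
  ∀ i < m,
    s i ⊆ E.filter (fun e => ∀ j < i, ∀ e' ∈ s j, ¬ Overlap e e') ∧
    (∃ ℓ, k ≤ ℓ ∧ IsRun (s i) ℓ) ∧
    (∀ r ℓ, IsRun r ℓ →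
      r ⊆ E.filter (fun e => ∀ j < i, ∀ e' ∈ s j, ¬ Overlap e e') →
      ℓ ≤ (s i).card)

/-- `M` is a `t`-locally-optimal consecutive matching in `E`. -/
def LocallyOptimal {n : ℕ} (E M : Finset (Fin n × Fin n)) (t : ℕ) : Prop :=
  ConsecMatching E M ∧
  ¬ ∃ Erem Eadd : Finset (Fin n × Fin n), Erem ⊆ M ∧ Eadd ⊆ E \ M ∧
      Erem.card < Eadd.card ∧ Eadd.card ≤ t ∧
      ConsecMatching E ((M \ Erem) ∪ Eadd)

/-! Two greedy runs never overlap, so their coordinates differ by at least two and their union is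
a consecutive matching. For the ratio, each edge `e` of a consecutive matching `O` is charged to
the first run `s i` it overlaps; `e` is then still available at step `i`. The edges overlapping a
run of length `ℓ` at `(p, q)` have first coordinate in `[p - 1, p + ℓ]` or second coordinate in
`[q - 1, q + ℓ]`, and `O` has at most one edge per coordinate value, so at most `2ℓ + 4 ≤ 4ℓ` of
them are charged when `ℓ ≥ 2`. When `ℓ = 1`, maximality of the greedy choice forbids two
consecutive available edges, so each window of three values carries at most two edges of `O`. -/

section Counting

variable {α : Type*} {O : Finset α} {f : α → ℕ}

lemma card_filter_window_le (hf : Set.InjOn f O) (p ℓ : ℕ) :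
    (O.filter fun x => p ≤ f x + 1 ∧ f x ≤ p + ℓ).card ≤ ℓ + 2 := by
  have h : (O.filter fun x => p ≤ f x + 1 ∧ f x ≤ p + ℓ).card ≤
      (Finset.Icc (p - 1) (p + ℓ)).card := Finset.card_le_card_of_injOn f
    (fun x hx => by
      have := (Finset.mem_filter.mp hx).2
      simp only [Finset.coe_Icc, Set.mem_Icc]; omega)
    (hf.mono (Finset.coe_subset.mpr (Finset.filter_subset _ O)))
  rw [Nat.card_Icc] at h
  omega

lemma card_filter_window_le_two (hf : Set.InjOn f O)
    (hgap : ∀ x ∈ O, ∀ y ∈ O, f y ≠ f x + 1) (p : ℕ) :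
    (O.filter fun x => p ≤ f x + 1 ∧ f x ≤ p + 1).card ≤ 2 := by
  by_contra! h
  obtain ⟨x, hx, y, hy, z, hz, hxy, hxz, hyz⟩ := Finset.two_lt_card.mp h
  simp only [Finset.mem_filter] at hx hy hz
  have hfxy : f x ≠ f y := fun h => hxy (hf hx.1 hy.1 h)
  have hfxz : f x ≠ f z := fun h => hxz (hf hx.1 hz.1 h)
  have hfyz : f y ≠ f z := fun h => hyz (hf hy.1 hz.1 h)
  have := hgap x hx.1 y hy.1
  have := hgap y hy.1 x hx.1
  have := hgap x hx.1 z hz.1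
  have := hgap z hz.1 x hx.1
  have := hgap y hy.1 z hz.1
  have := hgap z hz.1 y hy.1
  omega

end Counting

section Greedy

variable {n : ℕ}

lemma Overlap.refl (e : Fin n × Fin n) : Overlap e e := by
  unfold Overlap; omega

lemma Overlap.symm {e e' : Fin n × Fin n} (h : Overlap e e') : Overlap e' e := by
  unfold Overlap at *; omega

namespace IsRunAt

variable {s : Finset (Fin n × Fin n)} {p q ℓ : ℕ}

lemma card_eq (h : IsRunAt s p q ℓ) : s.card = ℓ := by
  obtain ⟨hp, hq, hmem⟩ := h
  rw [← Finset.card_range ℓ]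
  refine Finset.card_bij (fun e _ => e.1.val - p) (fun e he => ?_) (fun e he e' he' h => ?_)
    (fun r hr => ?_)
  · obtain ⟨r, hr, h1, -⟩ := (hmem e).1 he
    simp only [Finset.mem_range]; omega
  · obtain ⟨r, -, h1, h2⟩ := (hmem e).1 he
    obtain ⟨r', -, h1', h2'⟩ := (hmem e').1 he'
    exact Prod.ext (Fin.ext (by omega)) (Fin.ext (by omega))
  · simp only [Finset.mem_range] at hr
    exact ⟨(⟨p + r, by omega⟩, ⟨q + r, by omega⟩), (hmem _).2 ⟨r, hr, rfl, rfl⟩, by simp⟩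

lemma sub_eq_sub (h : IsRunAt s p q ℓ) {e e' : Fin n × Fin n} (he : e ∈ s) (he' : e' ∈ s) :
    (e.1.val : ℤ) - e'.1.val = e.2.val - e'.2.val := by
  obtain ⟨r, -, h1, h2⟩ := (h.2.2 e).1 he
  obtain ⟨r', -, h1', h2'⟩ := (h.2.2 e').1 he'
  omega

lemma window_of_overlap (h : IsRunAt s p q ℓ) {e e' : Fin n × Fin n} (he' : e' ∈ s)
    (hov : Overlap e e') :
    (p ≤ e.1.val + 1 ∧ e.1.val ≤ p + ℓ) ∨ (q ≤ e.2.val + 1 ∧ e.2.val ≤ q + ℓ) := by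
  obtain ⟨r, hr, h1, h2⟩ := (h.2.2 e').1 he'
  unfold Overlap at hov
  omega

end IsRunAt

lemma isRunAt_pair {e e' : Fin n × Fin n}
    (h1 : e'.1.val = e.1.val + 1) (h2 : e'.2.val = e.2.val + 1) :
    IsRunAt {e, e'} e.1.val e.2.val 2 := by
  refine ⟨by have := e'.1.isLt; omega, by have := e'.2.isLt; omega, fun x => ?_⟩
  simp only [Finset.mem_insert, Finset.mem_singleton]
  constructor
  · rintro (rfl | rfl)
    · exact ⟨0, by omega, by omega, by omega⟩
    · exact ⟨1, by omega, by omega, by omega⟩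
  · rintro ⟨r, hr, hx1, hx2⟩
    interval_cases r
    · exact Or.inl (Prod.ext (Fin.ext (by omega)) (Fin.ext (by omega)))
    · exact Or.inr (Prod.ext (Fin.ext (by omega)) (Fin.ext (by omega)))

lemma consecMatching_of_pairwise {E M : Finset (Fin n × Fin n)} (hME : M ⊆ E)
    (h : ∀ e ∈ M, ∀ e' ∈ M,
      (e.1.val : ℤ) - e'.1.val = e.2.val - e'.2.val ∨ ¬ Overlap e e') :
    ConsecMatching E M := by
  simp only [Overlap] at h
  refine ⟨hME, fun e he e' he' hne => ?_, fun e he e' he' h1 => ?_, fun e he e' he' h2 => ?_⟩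
  · have hne' : e.1.val ≠ e'.1.val ∨ e.2.val ≠ e'.2.val := by
      by_contra! hc
      exact hne (Prod.ext (Fin.ext hc.1) (Fin.ext hc.2))
    rcases h e he e' he' with hd | hd <;>
      exact ⟨fun hc => by have := congrArg Fin.val hc; omega,
        fun hc => by have := congrArg Fin.val hc; omega⟩
  all_goals rcases h e he e' he' with hd | hd <;> omega

namespace ConsecMatching

variable {E O : Finset (Fin n × Fin n)}

lemma mono (hO : ConsecMatching E O) {E' O' : Finset (Fin n × Fin n)} (hO' : O' ⊆ O)
    (hE' : O' ⊆ E') : ConsecMatching E' O' :=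
  ⟨hE', fun e he e' he' => hO.2.1 e (hO' he) e' (hO' he'),
    fun e he e' he' => hO.2.2.1 e (hO' he) e' (hO' he'),
    fun e he e' he' => hO.2.2.2 e (hO' he) e' (hO' he')⟩

lemma injOn_fst (hO : ConsecMatching E O) :
    Set.InjOn (fun e : Fin n × Fin n => e.1.val) (O : Set _) := by
  intro e he e' he' h
  by_contra hne
  exact (hO.2.1 e he e' he' hne).1 (Fin.ext h)

lemma injOn_snd (hO : ConsecMatching E O) :
    Set.InjOn (fun e : Fin n × Fin n => e.2.val) (O : Set _) := by
  intro e he e' he' h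
  by_contra hne
  exact (hO.2.1 e he e' he' hne).2 (Fin.ext h)

lemma fst_ne_succ (hO : ConsecMatching E O) (hE : NoRun E 2) :
    ∀ e ∈ O, ∀ e' ∈ O, e'.1.val ≠ e.1.val + 1 := by
  intro e he e' he' h1
  refine hE ⟨{e, e'}, ⟨_, _, isRunAt_pair h1 (hO.2.2.1 e he e' he' h1)⟩, ?_⟩
  simp only [Finset.insert_subset_iff, Finset.singleton_subset_iff]
  exact ⟨hO.1 he, hO.1 he'⟩

lemma snd_ne_succ (hO : ConsecMatching E O) (hE : NoRun E 2) :
    ∀ e ∈ O, ∀ e' ∈ O, e'.2.val ≠ e.2.val + 1 :=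
  fun e he e' he' h2 => hO.fst_ne_succ hE e he e' he' (hO.2.2.2 e he e' he' h2)

/-- `E` plays the role of the edges still available when the greedy procedure picks the run `s`. -/
lemma card_le_four_mul_of_overlap {s : Finset (Fin n × Fin n)} {p q ℓ : ℕ}
    (hO : ConsecMatching E O) (hs : IsRunAt s p q ℓ)
    (hmax : ∀ r ℓ', IsRun r ℓ' → r ⊆ E → ℓ' ≤ s.card)
    (hover : ∀ e ∈ O, ∃ e' ∈ s, Overlap e e') :
    O.card ≤ 4 * s.card := by
  rw [hs.card_eq] at hmax ⊢
  set X := O.filter fun e => p ≤ e.1.val + 1 ∧ e.1.val ≤ p + ℓ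
  set Y := O.filter fun e => q ≤ e.2.val + 1 ∧ e.2.val ≤ q + ℓ
  have hcover : O.card ≤ X.card + Y.card := by
    refine (Finset.card_le_card fun e he => ?_).trans (Finset.card_union_le X Y)
    obtain ⟨e', he', hov⟩ := hover e he
    rcases hs.window_of_overlap he' hov with h | h
    · exact Finset.mem_union_left _ (Finset.mem_filter.mpr ⟨he, h⟩)
    · exact Finset.mem_union_right _ (Finset.mem_filter.mpr ⟨he, h⟩)
  obtain rfl | rfl | hℓ : ℓ = 0 ∨ ℓ = 1 ∨ 2 ≤ ℓ := by omega
  · have hs0 : s = ∅ := Finset.card_eq_zero.mp hs.card_eq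
    have hO0 : O = ∅ := Finset.eq_empty_of_forall_notMem fun e he => by
      simpa [hs0] using hover e he
    simp [hO0]
  · have hE : NoRun E 2 := fun ⟨r, hr, hrE⟩ => by have := hmax r 2 hr hrE; omega
    have hX : X.card ≤ 2 := card_filter_window_le_two hO.injOn_fst (hO.fst_ne_succ hE) p
    have hY : Y.card ≤ 2 := card_filter_window_le_two hO.injOn_snd (hO.snd_ne_succ hE) q
    omega
  · have hX : X.card ≤ ℓ + 2 := card_filter_window_le hO.injOn_fst p ℓ
    have hY : Y.card ≤ ℓ + 2 := card_filter_window_le hO.injOn_snd q ℓ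
    omega

end ConsecMatching

def chargedTo (O : Finset (Fin n × Fin n)) (s : ℕ → Finset (Fin n × Fin n)) (i : ℕ) :
    Finset (Fin n × Fin n) :=
  O.filter fun e => (∃ e' ∈ s i, Overlap e e') ∧ ∀ j < i, ∀ e' ∈ s j, ¬ Overlap e e'

lemma card_le_sum_card_chargedTo {O : Finset (Fin n × Fin n)} {s : ℕ → Finset (Fin n × Fin n)}
    {m : ℕ} (hcover : ∀ e ∈ O, ∃ i < m, ∃ e' ∈ s i, Overlap e e') :
    O.card ≤ ∑ i ∈ Finset.range m, (chargedTo O s i).card := by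
  refine (Finset.card_le_card fun e he => ?_).trans Finset.card_biUnion_le
  obtain ⟨i₀, hi₀, hw⟩ := hcover e he
  have hex : ∃ i, ∃ e' ∈ s i, Overlap e e' := ⟨i₀, hw⟩
  refine Finset.mem_biUnion.mpr ⟨Nat.find hex,
    Finset.mem_range.mpr ((Nat.find_min' hex hw).trans_lt hi₀), Finset.mem_filter.mpr
      ⟨he, Nat.find_spec hex, fun j hj e' he' hov => Nat.find_min hex hj ⟨e', he', hov⟩⟩⟩

namespace GreedySeq

variable {E : Finset (Fin n × Fin n)} {k m : ℕ} {s : ℕ → Finset (Fin n × Fin n)}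

lemma subset (hg : GreedySeq E k m s) {i : ℕ} (hi : i < m) : s i ⊆ E :=
  (hg i hi).1.trans (Finset.filter_subset _ _)

lemma not_overlap (hg : GreedySeq E k m s) {i j : ℕ} (hi : i < m) (hj : j < m) (hij : i ≠ j)
    {e e' : Fin n × Fin n} (he : e ∈ s i) (he' : e' ∈ s j) : ¬ Overlap e e' := by
  rcases Nat.lt_or_gt_of_ne hij with h | h
  · exact fun hov => (Finset.mem_filter.mp ((hg j hj).1 he')).2 i h e he hov.symm
  · exact (Finset.mem_filter.mp ((hg i hi).1 he)).2 j h e' he'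

lemma consecMatching_biUnion (hg : GreedySeq E k m s) :
    ConsecMatching E ((Finset.range m).biUnion s) := by
  refine consecMatching_of_pairwise
    (Finset.biUnion_subset.mpr fun i hi => hg.subset (Finset.mem_range.mp hi)) ?_
  simp only [Finset.mem_biUnion, Finset.mem_range]
  rintro e ⟨i, hi, he⟩ e' ⟨j, hj, he'⟩
  by_cases hij : i = j
  · subst hij
    obtain ⟨-, ⟨ℓ, -, p, q, hrun⟩, -⟩ := hg i hi
    exact Or.inl (hrun.sub_eq_sub he he')
  · exact Or.inr (hg.not_overlap hi hj hij he he')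

lemma card_biUnion (hg : GreedySeq E k m s) :
    ((Finset.range m).biUnion s).card = ∑ i ∈ Finset.range m, (s i).card :=
  Finset.card_biUnion fun _ hi _ hj hij => Finset.disjoint_left.mpr fun e hei hej =>
    hg.not_overlap (Finset.mem_range.mp hi) (Finset.mem_range.mp hj) hij hei hej (.refl e)

lemma card_chargedTo_le (hg : GreedySeq E k m s) {O : Finset (Fin n × Fin n)}
    (hO : ConsecMatching E O) {i : ℕ} (hi : i < m) :
    (chargedTo O s i).card ≤ 4 * (s i).card := by
  obtain ⟨-, ⟨ℓ, -, p, q, hrun⟩, hmax⟩ := hg i hi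
  have hO' : ConsecMatching (E.filter fun e => ∀ j < i, ∀ e' ∈ s j, ¬ Overlap e e')
      (chargedTo O s i) :=
    hO.mono (Finset.filter_subset _ _) fun e he =>
      have he := Finset.mem_filter.mp he
      Finset.mem_filter.mpr ⟨hO.1 he.1, he.2.2⟩
  exact hO'.card_le_four_mul_of_overlap hrun hmax fun e he => (Finset.mem_filter.mp he).2.1

end GreedySeq

end Greedy

theorem greedy_4_approx_general {n : ℕ}
    (E : Finset (Fin n × Fin n)) (m : ℕ) (s : ℕ → Finset (Fin n × Fin n))
    (hgreedy : GreedySeq E 1 m s)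
    (hexhaust : ∀ e ∈ E, ∃ i < m, ∃ e' ∈ s i, Overlap e e') :
    ConsecMatching E ((Finset.range m).biUnion s) ∧
    ∀ O : Finset (Fin n × Fin n), ConsecMatching E O →
      4 * ((Finset.range m).biUnion s).card ≥ O.card := by
  refine ⟨hgreedy.consecMatching_biUnion, fun O hO => ?_⟩
  calc O.card ≤ ∑ i ∈ Finset.range m, (chargedTo O s i).card :=
        card_le_sum_card_chargedTo fun e he => hexhaust e (hO.1 he)
    _ ≤ ∑ i ∈ Finset.range m, 4 * (s i).card :=
        Finset.sum_le_sum fun i hi => hgreedy.card_chargedTo_le hO (Finset.mem_range.mp hi)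
    _ = 4 * ((Finset.range m).biUnion s).card := by
        rw [hgreedy.card_biUnion, Finset.mul_sum]

/-- a greedy sequence with threshold 1 that exhausts the graph
(every edge of `E` overlaps some chosen edge) yields a consecutive matching
`ALG` in `E` with `4|ALG| ≥ |O|` for every consecutive matching `O` in `E`. -/
theorem greedy_4_approx {n : ℕ} (hn : 1 ≤ n)
    (E : Finset (Fin n × Fin n)) (m : ℕ) (s : ℕ → Finset (Fin n × Fin n))
    (hgreedy : GreedySeq E 1 m s)
    (hexhaust : ∀ e ∈ E, ∃ i < m, ∃ e' ∈ s i, Overlap e e') :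
    ConsecMatching E ((Finset.range m).biUnion s) ∧
    ∀ O : Finset (Fin n × Fin n), ConsecMatching E O →
      4 * ((Finset.range m).biUnion s).card ≥ O.card :=
  greedy_4_approx_general E m s hgreedy hexhaust
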